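/- For every rank-labeled tree of size s whose root has rank r ≥ 2, one has (r : ℝ) ≤ log_φ(s) + 2, where φ = (1 + √5)/2 is the golden ratio and log_φ denotes the logarithm to base φ. -/

import Mathlib

/-- `cdiv2 m` is the ceiling of `m / 2` for an integer `m`. -/
def cdiv2 (m : ℤ) : ℤ := ⌈(m : ℚ) / 2⌉

/-- A rooted tree in which every node carries an integer rank and an
ordered finite list of child subtrees. -/
inductive RTree : Type
  | node : ℤ → List RTree → RTree

/-- The rank of the root of a tree. -/
def RTree.rank : RTree → ℤ
  | .node r _ => r

mutual
  /-- The size of a tree: its total number of nodes. -/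
  def RTree.size : RTree → ℕ
    | .node _ cs => 1 + RTree.sizeList cs
  /-- The total number of nodes of a list of trees. -/
  def RTree.sizeList : List RTree → ℕ
    | [] => 0
    | t :: ts => RTree.size t + RTree.sizeList ts
end

/-- The rank of the `(i+1)`-st child from the end of the child list `cs`
(so `i = 0` gives the last child, `i = 1` the second to last), with the
convention that the rank of a missing child is `-1`. -/
def lastRank (cs : List RTree) (i : ℕ) : ℤ :=
  (cs.reverse[i]?).elim (-1) RTree.rank

/-- A rank-labeled tree: every node `z` satisfies `r_z ≥ 0` and
`r_z ≤ ⌈(r_{z1} + r_{z2})/2⌉ + 1` where `r_{z1}`, `r_{z2}` are the ranks of the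
last two children (a missing child having rank `-1`). -/
inductive RTree.Valid : RTree → Prop
  | node (r : ℤ) (cs : List RTree)
      (hr : 0 ≤ r)
      (hrank : r ≤ cdiv2 (lastRank cs 0 + lastRank cs 1) + 1)
      (hcs : ∀ t ∈ cs, RTree.Valid t) :
      RTree.Valid (RTree.node r cs)

/-! Weight a tree of rank `r` by `φ ^ (r - 2)`. The rank condition `r ≤ ⌈(a + b)/2⌉ + 1` forces
`2r - 3 ≤ a + b`, and for such integers the Fibonacci recurrence `φ ^ m = φ ^ (m - 1) + φ ^ (m - 2)`
gives `φ ^ (r - 2) ≤ φ ^ (a - 2) + φ ^ (b - 2)`. Hence, by induction on the tree, the weight of a node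
is at most one plus the sizes of its last two children (a missing child, of rank `-1`, has weight
`φ ^ (-3) ≤ 1/2`), i.e. at most the size of the tree. Taking `log_φ` gives the bound. -/

open Real goldenRatio

theorem Real.goldenRatio_zpow_mono : Monotone (φ ^ · : ℤ → ℝ) :=
  zpow_right_mono₀ one_lt_goldenRatio.le

theorem Real.goldenRatio_zpow_eq_add (m : ℤ) : φ ^ m = φ ^ (m - 1) + φ ^ (m - 2) := by
  have h : φ ^ m = φ ^ (m - 2) * φ ^ 2 := by
    rw [← zpow_natCast, ← zpow_add₀ goldenRatio_ne_zero]; ring_nf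
  have h' : φ ^ (m - 1) = φ ^ (m - 2) * φ := by
    rw [← zpow_add_one₀ goldenRatio_ne_zero]; ring_nf
  rw [h, h', goldenRatio_sq]; ring

theorem Real.goldenRatio_zpow_le_add {m a b : ℤ} (h : 2 * m ≤ a + b + 3) :
    φ ^ m ≤ φ ^ a + φ ^ b := by
  wlog hba : b ≤ a generalizing a b
  · rw [add_comm]; exact this (by omega) (by omega)
  rcases le_or_gt m a with hma | ham
  · linarith [goldenRatio_zpow_mono hma, zpow_pos goldenRatio_pos b]
  · calc φ ^ m = φ ^ (m - 1) + φ ^ (m - 2) := goldenRatio_zpow_eq_add m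
      _ ≤ φ ^ a + φ ^ b :=
        add_le_add (goldenRatio_zpow_mono (by omega)) (goldenRatio_zpow_mono (by omega))

theorem Real.goldenRatio_zpow_neg_three_le : φ ^ (-3 : ℤ) ≤ 1 / 2 := by
  have h := goldenRatio_zpow_eq_add 0
  simp only [zpow_zero, zero_sub] at h
  linarith [goldenRatio_zpow_mono (show (-3 : ℤ) ≤ -1 by norm_num),
    goldenRatio_zpow_mono (show (-3 : ℤ) ≤ -2 by norm_num)]

theorem two_mul_sub_one_le_of_le_cdiv2 {k m : ℤ} (h : k ≤ cdiv2 m) : 2 * k - 1 ≤ m := by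
  rw [cdiv2, Int.le_ceil_iff] at h
  have : ((2 * k - 2 : ℤ) : ℚ) < m := by push_cast; linarith
  have := Int.cast_lt.mp this
  omega

namespace RTree

theorem size_pos (t : RTree) : 0 < t.size := by
  cases t; simp [size]

theorem sizeList_eq_sum (l : List RTree) : sizeList l = (l.map size).sum := by
  induction l with
  | nil => rfl
  | cons t l ih => simp [sizeList, ih]

theorem sizeList_reverse (l : List RTree) : sizeList l.reverse = sizeList l := by
  simp [sizeList_eq_sum, List.map_reverse, List.sum_reverse]

theorem goldenRatio_zpow_lastRank_add_le {cs : List RTree}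
    (hcs : ∀ t ∈ cs, φ ^ (t.rank - 2) ≤ (t.size : ℝ)) :
    φ ^ (lastRank cs 0 - 2) + φ ^ (lastRank cs 1 - 2) ≤ (sizeList cs : ℝ) + 1 := by
  simp only [lastRank, ← sizeList_reverse cs]
  replace hcs : ∀ t ∈ cs.reverse, φ ^ (t.rank - 2) ≤ (t.size : ℝ) := by simpa using hcs
  generalize cs.reverse = l at hcs ⊢
  have hmissing := goldenRatio_zpow_neg_three_le
  match l with
  | [] =>
    simp only [List.getElem?_nil, Option.elim, sizeList, Nat.cast_zero, Int.reduceSub]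
    linarith
  | [c] =>
    simp only [List.getElem?_cons_zero, List.getElem?_cons_succ, List.getElem?_nil, Option.elim,
      sizeList, add_zero, Int.reduceSub]
    linarith [hcs c (by simp)]
  | c₁ :: c₂ :: l =>
    simp only [List.getElem?_cons_zero, List.getElem?_cons_succ, Option.elim, sizeList]
    push_cast
    linarith [hcs c₁ (by simp), hcs c₂ (by simp), (sizeList l).cast_nonneg (α := ℝ)]

theorem Valid.goldenRatio_zpow_le_size {t : RTree} (h : t.Valid) :
    φ ^ (t.rank - 2) ≤ (t.size : ℝ) := by
  induction h with
  | node r cs _ hrank _ ih =>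
    have hsum : 2 * (r - 2) ≤ (lastRank cs 0 - 2) + (lastRank cs 1 - 2) + 3 := by
      have := two_mul_sub_one_le_of_le_cdiv2 (k := r - 1) (m := lastRank cs 0 + lastRank cs 1)
        (by omega)
      omega
    calc φ ^ (r - 2) ≤ φ ^ (lastRank cs 0 - 2) + φ ^ (lastRank cs 1 - 2) :=
          goldenRatio_zpow_le_add hsum
      _ ≤ (sizeList cs : ℝ) + 1 := goldenRatio_zpow_lastRank_add_le ih
      _ = (RTree.node r cs).size := by simp [size, add_comm]

end RTree

/-- The corollary to the structural lemma: for a rank-labeled tree of size `s`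
whose root has rank `r ≥ 2`, one has `r ≤ log_φ s + 2`. -/
theorem rank_le_log_size (t : RTree) (h : t.Valid) (hr : 2 ≤ t.rank) :
    (t.rank : ℝ) ≤ Real.logb ((1 + Real.sqrt 5) / 2) (t.size : ℝ) + 2 := by
  have hlog : ((t.rank - 2 : ℤ) : ℝ) ≤ logb φ t.size := by
    rw [le_logb_iff_rpow_le one_lt_goldenRatio (by exact_mod_cast t.size_pos), rpow_intCast]
    exact h.goldenRatio_zpow_le_size
  push_cast at hlog
  linarith
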